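/- (Termination of PNM with deterministic RBBRs.) Consider sequences of subgame strategy sets T_A^k ⊆ S_A, T_B^k ⊆ S_B (k ∈ ℕ) with T_A^0 and T_B^0 nonempty, mixed strategies μ_k, ν_k, and pure strategies a*_k ∈ S_A, b*_k ∈ S_B satisfying for every k: (i) (μ_k, ν_k) is a Nash equilibrium of the subgame (supp μ_k ⊆ T_A^k, supp ν_k ⊆ T_B^k, U(a, ν_k) ≤ U(μ_k, ν_k) for all a ∈ T_A^k, and U(μ_k, b) ≥ U(μ_k, ν_k) for all b ∈ T_B^k); (ii) a*_k maximizes a ↦ U(a, ν_k) over S_A and b*_k minimizes b ↦ U(μ_k, b) over S_B; (iii) T_A^{k+1} = T_A^k ∪ {a*_k} and T_B^{k+1} = T_B^k ∪ {b*_k}. Then there exists an index k ≤ |S_A| + |S_B| at which the stopping condition holds: U(a*_k, ν_k) - U(μ_k, b*_k) ≤ 0, and at that index (μ_k, ν_k) is a resource-bounded Nash equilibrium. -/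
import Mathlib


open Finset

/-- A mixed strategy: nonnegative weights summing to 1. -/
def IsMixed {A : Type*} [Fintype A] (μ : A → ℝ) : Prop :=
  (∀ a, 0 ≤ μ a) ∧ ∑ a, μ a = 1

/-- Expected payoff of player 1 in the zero-sum game `u`. -/
def payoff {A B : Type*} [Fintype A] [Fintype B]
    (u : A → B → ℝ) (μ : A → ℝ) (ν : B → ℝ) : ℝ :=
  ∑ a, ∑ b, μ a * ν b * u a b

/-- The Dirac (pure) mixed strategy at `a`. -/
def dirac {A : Type*} [DecidableEq A] (a : A) : A → ℝ :=
  fun a' => if a' = a then 1 else 0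

lemma payoff_right_decomp {A B : Type*} [Fintype A] [Fintype B] [DecidableEq B]
    (u : A → B → ℝ) (μ : A → ℝ) (ν : B → ℝ) :
    payoff u μ ν = ∑ b, ν b * payoff u μ (dirac b) := by
  unfold payoff dirac
  rw [Finset.sum_comm]
  simp [Finset.mul_sum, mul_ite, ite_mul, Finset.sum_ite_eq']
  congr 1; ext b; congr 1; ext a; ring

lemma payoff_left_decomp {A B : Type*} [Fintype A] [Fintype B] [DecidableEq A]
    (u : A → B → ℝ) (μ : A → ℝ) (ν : B → ℝ) :
    payoff u μ ν = ∑ a, μ a * payoff u (dirac a) ν := by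
  unfold payoff dirac
  simp [ite_mul, Finset.sum_ite_eq', Finset.mul_sum, mul_assoc]

lemma convex_le {B : Type*} [Fintype B] (ν : B → ℝ) (hν : IsMixed ν)
    (T : Finset B) (hsupp : Function.support ν ⊆ ↑T) (g : B → ℝ) (c : ℝ)
    (h : ∀ b ∈ T, c ≤ g b) : c ≤ ∑ b, ν b * g b := by
  have h1 : ∀ b ∈ Finset.univ, ν b * c ≤ ν b * g b := by
    intro b _
    by_cases hb : ν b = 0
    · simp [hb]
    · exact mul_le_mul_of_nonneg_left (h b (hsupp hb)) (hν.1 b)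
  calc c = ∑ b, ν b * c := by rw [← Finset.sum_mul, hν.2, one_mul]
  _ ≤ ∑ b, ν b * g b := Finset.sum_le_sum h1

lemma convex_ge {B : Type*} [Fintype B] (ν : B → ℝ) (hν : IsMixed ν)
    (T : Finset B) (hsupp : Function.support ν ⊆ ↑T) (g : B → ℝ) (c : ℝ)
    (h : ∀ b ∈ T, g b ≤ c) : ∑ b, ν b * g b ≤ c := by
  have h1 : ∀ b ∈ Finset.univ, ν b * g b ≤ ν b * c := by
    intro b _
    by_cases hb : ν b = 0
    · simp [hb]
    · exact mul_le_mul_of_nonneg_left (h b (hsupp hb)) (hν.1 b)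
  calc ∑ b, ν b * g b ≤ ∑ b, ν b * c := Finset.sum_le_sum h1
  _ = c := by rw [← Finset.sum_mul, hν.2, one_mul]

theorem pnm_terminates
    {A B : Type*} [Fintype A] [Fintype B] [DecidableEq A] [DecidableEq B]
    [Nonempty A] [Nonempty B]
    (u : A → B → ℝ) (SA : Finset A) (SB : Finset B)
    (hSA : SA.Nonempty) (hSB : SB.Nonempty)
    (TA : ℕ → Finset A) (TB : ℕ → Finset B)
    (hTA0 : (TA 0).Nonempty) (hTB0 : (TB 0).Nonempty)
    (hTASA : ∀ k, TA k ⊆ SA) (hTBSB : ∀ k, TB k ⊆ SB)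
    (μ : ℕ → A → ℝ) (ν : ℕ → B → ℝ)
    (astar : ℕ → A) (bstar : ℕ → B)
    (hμ : ∀ k, IsMixed (μ k)) (hν : ∀ k, IsMixed (ν k))
    (hμsupp : ∀ k, Function.support (μ k) ⊆ ↑(TA k))
    (hνsupp : ∀ k, Function.support (ν k) ⊆ ↑(TB k))
    (hNE1 : ∀ k, ∀ a ∈ TA k, payoff u (dirac a) (ν k) ≤ payoff u (μ k) (ν k))
    (hNE2 : ∀ k, ∀ b ∈ TB k, payoff u (μ k) (ν k) ≤ payoff u (μ k) (dirac b))
    (hastar : ∀ k, astar k ∈ SA) (hbstar : ∀ k, bstar k ∈ SB)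
    (hmax : ∀ k, ∀ a ∈ SA, payoff u (dirac a) (ν k) ≤ payoff u (dirac (astar k)) (ν k))
    (hmin : ∀ k, ∀ b ∈ SB, payoff u (μ k) (dirac (bstar k)) ≤ payoff u (μ k) (dirac b))
    (hgrowA : ∀ k, TA (k + 1) = insert (astar k) (TA k))
    (hgrowB : ∀ k, TB (k + 1) = insert (bstar k) (TB k)) :
    ∃ k ≤ SA.card + SB.card,
      payoff u (dirac (astar k)) (ν k) - payoff u (μ k) (dirac (bstar k)) ≤ 0 ∧
      (∀ a ∈ SA, payoff u (dirac a) (ν k) ≤ payoff u (μ k) (ν k)) ∧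
      (∀ b ∈ SB, payoff u (μ k) (ν k) ≤ payoff u (μ k) (dirac b)) := by
  set N := SA.card + SB.card with hN
  -- the mixed-strategy payoff is sandwiched between the best responses
  have hbstar_le : ∀ k, payoff u (μ k) (dirac (bstar k)) ≤ payoff u (μ k) (ν k) := by
    intro k
    rw [payoff_right_decomp u (μ k) (ν k)]
    exact convex_le (ν k) (hν k) (TB k) (hνsupp k) _ _
      (fun b hb => hmin k b (hTBSB k hb))
  have hle_astar : ∀ k, payoff u (μ k) (ν k) ≤ payoff u (dirac (astar k)) (ν k) := by
    intro k
    rw [payoff_left_decomp u (μ k) (ν k)]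
    exact convex_ge (μ k) (hμ k) (TA k) (hμsupp k) _ _
      (fun a ha => hmax k a (hTASA k ha))
  -- once the stopping condition holds, we have an RB-NE
  have stop_implies : ∀ k,
      payoff u (dirac (astar k)) (ν k) - payoff u (μ k) (dirac (bstar k)) ≤ 0 →
      (∀ a ∈ SA, payoff u (dirac a) (ν k) ≤ payoff u (μ k) (ν k)) ∧
      (∀ b ∈ SB, payoff u (μ k) (ν k) ≤ payoff u (μ k) (dirac b)) := by
    intro k hstop
    rw [sub_nonpos] at hstop
    constructor
    · intro a ha
      calc payoff u (dirac a) (ν k) ≤ payoff u (dirac (astar k)) (ν k) := hmax k a ha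
        _ ≤ payoff u (μ k) (dirac (bstar k)) := hstop
        _ ≤ payoff u (μ k) (ν k) := hbstar_le k
    · intro b hb
      calc payoff u (μ k) (ν k) ≤ payoff u (dirac (astar k)) (ν k) := hle_astar k
        _ ≤ payoff u (μ k) (dirac (bstar k)) := hstop
        _ ≤ payoff u (μ k) (dirac b) := hmin k b hb
  suffices h : ∃ k ≤ N, payoff u (dirac (astar k)) (ν k) - payoff u (μ k) (dirac (bstar k)) ≤ 0 by
    obtain ⟨k, hk, hs⟩ := h
    exact ⟨k, hk, hs, stop_implies k hs⟩
  by_contra hcon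
  push_neg at hcon
  -- each non-stopping step strictly grows the subgame
  have grow : ∀ k, 0 < payoff u (dirac (astar k)) (ν k) - payoff u (μ k) (dirac (bstar k)) →
      (TA k).card + (TB k).card + 1 ≤ (TA (k+1)).card + (TB (k+1)).card := by
    intro k hk
    have hnot : astar k ∉ TA k ∨ bstar k ∉ TB k := by
      by_contra hboth
      push_neg at hboth
      have h1 := hNE1 k (astar k) hboth.1
      have h2 := hNE2 k (bstar k) hboth.2
      linarith
    have hA : (TA k).card ≤ (TA (k+1)).card := by
      rw [hgrowA k]; exact Finset.card_le_card (Finset.subset_insert _ _)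
    have hB : (TB k).card ≤ (TB (k+1)).card := by
      rw [hgrowB k]; exact Finset.card_le_card (Finset.subset_insert _ _)
    rcases hnot with hna | hnb
    · have : (TA (k+1)).card = (TA k).card + 1 := by
        rw [hgrowA k, Finset.card_insert_of_notMem hna]
      omega
    · have : (TB (k+1)).card = (TB k).card + 1 := by
        rw [hgrowB k, Finset.card_insert_of_notMem hnb]
      omega
  have lower : ∀ k ≤ N + 1, k + 2 ≤ (TA k).card + (TB k).card := by
    intro k
    induction k with
    | zero =>
      intro _
      have h1 : 1 ≤ (TA 0).card := Finset.card_pos.mpr hTA0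
      have h2 : 1 ≤ (TB 0).card := Finset.card_pos.mpr hTB0
      omega
    | succ n ih =>
      intro hn
      have hih := ih (by omega)
      have hg := grow n (hcon n (by omega))
      omega
  have hupper : (TA (N+1)).card + (TB (N+1)).card ≤ N := by
    have h1 : (TA (N+1)).card ≤ SA.card := Finset.card_le_card (hTASA _)
    have h2 : (TB (N+1)).card ≤ SB.card := Finset.card_le_card (hTBSB _)
    omega
  have := lower (N+1) le_rfl
  omega
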